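/- Let ξ ∈ ℝ with ξ ≠ 0 and ξ < 1, and let F_ξ be the cumulative distribution function of the generalized Pareto distribution with shape ξ, zero location and unit scale: F_ξ(x) = 0 for x < 0; F_ξ(x) = 1 − (1 + ξx)^{−1/ξ} for x ≥ 0 with 1 + ξx > 0; and F_ξ(x) = 1 for x ≥ −1/ξ when ξ < 0. Then for every threshold τ ≥ 0 and observation y ≥ 0 (with, when ξ < 0, also τ ≤ −1/ξ and y ≤ −1/ξ), writing v = max(y, τ): twCRPS_τ(F_ξ, y) = v − τ + (2/(1 − ξ)) ((1 − F_ξ(v))^{1−ξ} − (1 − F_ξ(τ))^{1−ξ}) + (1/(2 − ξ)) (1 − F_ξ(τ))^{2−ξ}. -/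

import Mathlib

open MeasureTheory Set

/-- Threshold-weighted CRPS: `twCRPS_τ(F, y) = ∫_τ^∞ (F(z) − 𝟙{z ≥ y})² dz`. -/
noncomputable def twCRPS (F : ℝ → ℝ) (τ y : ℝ) : ℝ :=
  ∫ z in Set.Ioi τ, (F z - if y ≤ z then (1 : ℝ) else 0) ^ 2

/-- CDF of the generalized Pareto distribution with shape `ξ`, zero location and
unit scale: `0` for `x < 0`, `1 − (1 + ξx)^{−1/ξ}` for `x ≥ 0` with `1 + ξx > 0`,
and `1` otherwise (i.e. for `x ≥ −1/ξ` when `ξ < 0`). -/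
noncomputable def gpdCDF (ξ : ℝ) (x : ℝ) : ℝ :=
  if x < 0 then 0
  else if 0 < 1 + ξ * x then 1 - (1 + ξ * x) ^ (-1 / ξ) else 1

/-!
With `S = 1 - F`, the integrand is `S z ^ 2 + 𝟙{z < y} (1 - 2 S z)`, so the score equals
`∫_τ^∞ S² + (v - τ) - 2 (∫_τ^∞ S - ∫_v^∞ S)` for every `F`. For the GPD, `S z = (1 + ξ z)^(-1/ξ)`
on the support, and `-S^(k-ξ) / (k-ξ)` is an antiderivative of `S^k` there which vanishes at the
right end of the support (`-1/ξ` if `ξ < 0`, `∞` if `0 < ξ < k`). Hence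
`∫_a^∞ S^k = S(a)^(k-ξ) / (k-ξ)`, and the cases `k = 1, 2` give the formula.
-/

open Filter Topology

theorem twCRPS_eq_integral_one_sub (F : ℝ → ℝ) (τ y : ℝ)
    (hS2 : IntegrableOn (fun z => (1 - F z) ^ 2) (Ioi τ))
    (hS : IntegrableOn (fun z => 1 - F z) (Ioi τ)) :
    twCRPS F τ y = (∫ z in Ioi τ, (1 - F z) ^ 2) + (max y τ - τ)
      - 2 * ((∫ z in Ioi τ, 1 - F z) - ∫ z in Ioi (max y τ), 1 - F z) := by
  set v := max y τ
  have hτv : τ ≤ v := le_max_right y τ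
  have hsplit : (fun z => (F z - if y ≤ z then (1 : ℝ) else 0) ^ 2) =
      fun z => (1 - F z) ^ 2 + (Iio y).indicator (fun z => 1 - 2 * (1 - F z)) z := by
    ext z
    rcases le_or_gt y z with h | h
    · rw [if_pos h, indicator_of_notMem (show z ∉ Iio y from not_lt.2 h)]; ring
    · rw [if_neg h.not_ge, indicator_of_mem (show z ∈ Iio y from h)]; ring
  have hIoo : Ioi τ ∩ Iio y = Ioo τ v := by
    ext z
    simp only [mem_inter_iff, mem_Ioi, mem_Iio, mem_Ioo, v, lt_max_iff]
    constructor
    · rintro ⟨h1, h2⟩; exact ⟨h1, Or.inl h2⟩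
    · rintro ⟨h1, h2 | h2⟩
      exacts [⟨h1, h2⟩, (lt_asymm h1 h2).elim]
  have hS' : IntegrableOn (fun z => 1 - F z) (Ioo τ v) := hS.mono_set Ioo_subset_Ioi_self
  have hone : IntegrableOn (fun _ => (1 : ℝ)) (Ioo τ v) := integrableOn_const measure_Ioo_lt_top.ne
  have hind : IntegrableOn ((Iio y).indicator fun z => 1 - 2 * (1 - F z)) (Ioi τ) := by
    rw [IntegrableOn, integrable_indicator_iff measurableSet_Iio, IntegrableOn,
      Measure.restrict_restrict measurableSet_Iio, inter_comm, hIoo]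
    exact hone.sub (hS'.const_mul 2)
  rw [twCRPS, hsplit, integral_add hS2 hind, setIntegral_indicator measurableSet_Iio, hIoo,
    integral_sub hone (hS'.const_mul 2), integral_const_mul, setIntegral_const,
    ← integral_Ioc_eq_integral_Ioo, ← Ioi_sdiff_Ioi,
    setIntegral_sdiff measurableSet_Ioi hS (Ioi_subset_Ioi hτv), Real.volume_real_Ioo_of_le hτv,
    smul_eq_mul, mul_one]
  ring

section GPD

variable {ξ : ℝ}

theorem one_sub_gpdCDF_of_nonneg (hξ : ξ ≠ 0) {x : ℝ} (hx : 0 ≤ x) (hx' : 0 ≤ 1 + ξ * x) :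
    1 - gpdCDF ξ x = (1 + ξ * x) ^ (-1 / ξ) := by
  rw [gpdCDF, if_neg hx.not_gt]
  rcases hx'.lt_or_eq with hpos | hzero
  · rw [if_pos hpos, sub_sub_cancel]
  · rw [← hzero, if_neg (lt_irrefl 0), sub_self,
      Real.zero_rpow (div_ne_zero (neg_ne_zero.2 one_ne_zero) hξ)]

theorem one_sub_gpdCDF_rpow (hξ : ξ ≠ 0) {x : ℝ} (hx : 0 ≤ x) (hx' : 0 ≤ 1 + ξ * x) (p : ℝ) :
    (1 - gpdCDF ξ x) ^ p = (1 + ξ * x) ^ (-p / ξ) := by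
  rw [one_sub_gpdCDF_of_nonneg hξ hx hx', ← Real.rpow_mul hx']
  ring_nf

theorem gpdCDF_eq_one {x : ℝ} (hx : 0 ≤ x) (hx' : 1 + ξ * x < 0) : gpdCDF ξ x = 1 := by
  rw [gpdCDF, if_neg hx.not_gt, if_neg hx'.not_gt]

theorem hasDerivAt_one_add_mul_rpow (hξ : ξ ≠ 0) {k z : ℝ} (hk : ξ ≠ k) (hz : 0 < 1 + ξ * z) :
    HasDerivAt (fun z => (1 + ξ * z) ^ ((ξ - k) / ξ) / (ξ - k)) ((1 + ξ * z) ^ (-k / ξ)) z := by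
  have hlin : HasDerivAt (fun z => 1 + ξ * z) ξ z := by
    simpa using ((hasDerivAt_id z).const_mul ξ).const_add 1
  refine ((hlin.rpow_const (p := (ξ - k) / ξ) (Or.inl hz.ne')).div_const (ξ - k)).congr_deriv ?_
  rw [show (ξ - k) / ξ - 1 = -k / ξ by field_simp; ring]
  field_simp [sub_ne_zero.2 hk]

theorem tendsto_one_add_mul_rpow_atTop (hξ : 0 < ξ) {q : ℝ} (hq : q < 0) :
    Tendsto (fun z => (1 + ξ * z) ^ q) atTop (𝓝 0) := by
  have hlin : Tendsto (fun z => 1 + ξ * z) atTop atTop :=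
    tendsto_atTop_add_const_left atTop 1 (tendsto_id.const_mul_atTop hξ)
  simpa [Function.comp_def] using (tendsto_rpow_neg_atTop (neg_pos.2 hq)).comp hlin

theorem integral_Ioi_one_sub_gpdCDF_rpow_of_pos (hξ : 0 < ξ) {k a : ℝ} (hk : ξ < k) (ha : 0 ≤ a) :
    IntegrableOn (fun z => (1 - gpdCDF ξ z) ^ k) (Ioi a) ∧
      ∫ z in Ioi a, (1 - gpdCDF ξ z) ^ k = (1 - gpdCDF ξ a) ^ (k - ξ) / (k - ξ) := by
  have hpos : ∀ z ∈ Ici a, 0 < 1 + ξ * z := fun z hz => by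
    have : 0 ≤ z := ha.trans hz
    positivity
  have heq : EqOn (fun z => (1 + ξ * z) ^ (-k / ξ)) (fun z => (1 - gpdCDF ξ z) ^ k) (Ioi a) :=
    fun z hz => (one_sub_gpdCDF_rpow hξ.ne' (ha.trans hz.out.le) (hpos z hz.out.le).le k).symm
  have hderiv := fun z hz => hasDerivAt_one_add_mul_rpow hξ.ne' hk.ne (hpos z hz)
  have hnonneg : ∀ z ∈ Ioi a, 0 ≤ (1 + ξ * z) ^ (-k / ξ) := fun z hz =>
    Real.rpow_nonneg (hpos z hz.out.le).le _
  have hlim := (tendsto_one_add_mul_rpow_atTop hξ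
    (div_neg_of_neg_of_pos (sub_neg.2 hk) hξ)).div_const (ξ - k)
  rw [zero_div] at hlim
  refine ⟨(integrableOn_Ioi_deriv_of_nonneg' hderiv hnonneg hlim).congr_fun heq measurableSet_Ioi,
    ?_⟩
  rw [← setIntegral_congr_fun measurableSet_Ioi heq,
    integral_Ioi_of_hasDerivAt_of_nonneg' hderiv hnonneg hlim,
    one_sub_gpdCDF_rpow hξ.ne' ha (hpos a self_mem_Ici).le, neg_sub, zero_sub,
    ← div_neg, neg_sub]

theorem integral_Ioi_one_sub_gpdCDF_rpow_of_neg (hξ : ξ < 0) {k a : ℝ} (hk : 0 < k) (ha : 0 ≤ a)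
    (ha' : 0 ≤ 1 + ξ * a) :
    IntegrableOn (fun z => (1 - gpdCDF ξ z) ^ k) (Ioi a) ∧
      ∫ z in Ioi a, (1 - gpdCDF ξ z) ^ k = (1 - gpdCDF ξ a) ^ (k - ξ) / (k - ξ) := by
  set m := -1 / ξ
  have hlin : ∀ z, 1 + ξ * z = ξ * (z - m) := fun z => by
    rw [mul_sub, mul_div_cancel₀ _ hξ.ne]; ring
  have ham : a ≤ m := by
    rw [hlin] at ha'
    linarith [nonpos_of_mul_nonneg_right ha' hξ]
  have heq : EqOn (fun z => (1 - gpdCDF ξ z) ^ k) (fun z => (1 + ξ * z) ^ (-k / ξ)) (Icc a m) :=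
    fun z hz => one_sub_gpdCDF_rpow hξ.ne (ha.trans hz.1)
      (by rw [hlin]; exact mul_nonneg_of_nonpos_of_nonpos hξ.le (sub_nonpos.2 hz.2)) k
  have hzero : EqOn (fun z => (1 - gpdCDF ξ z) ^ k) (fun _ => 0) (Ioi m) := fun z hz => by
    have hz' : 1 + ξ * z < 0 := by rw [hlin]; exact mul_neg_of_neg_of_pos hξ (sub_pos.2 hz)
    simp only [gpdCDF_eq_one (ha.trans (ham.trans hz.out.le)) hz', sub_self,
      Real.zero_rpow hk.ne']
  have hcont : Continuous fun z => (1 + ξ * z) ^ (-k / ξ) :=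
    (by fun_prop : Continuous fun z => 1 + ξ * z).rpow_const
      fun _ => Or.inr (div_nonneg_of_nonpos (neg_nonpos.2 hk.le) hξ.le)
  have hprim : Continuous fun z => (1 + ξ * z) ^ ((ξ - k) / ξ) / (ξ - k) :=
    ((by fun_prop : Continuous fun z => 1 + ξ * z).rpow_const
      fun _ => Or.inr (div_nonneg_of_nonpos (by linarith) hξ.le)).div_const _
  have hFTC : ∫ z in a..m, (1 + ξ * z) ^ (-k / ξ) =
      (1 + ξ * m) ^ ((ξ - k) / ξ) / (ξ - k) - (1 + ξ * a) ^ ((ξ - k) / ξ) / (ξ - k) :=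
    intervalIntegral.integral_eq_sub_of_hasDerivAt_of_le ham hprim.continuousOn
      (fun z hz => hasDerivAt_one_add_mul_rpow hξ.ne (hξ.trans hk).ne
        (by rw [hlin]; exact mul_pos_of_neg_of_neg hξ (sub_neg.2 hz.2)))
      (hcont.intervalIntegrable _ _)
  have hIoc : IntegrableOn (fun z => (1 - gpdCDF ξ z) ^ k) (Ioc a m) :=
    (hcont.integrableOn_Icc.mono_set Ioc_subset_Icc_self).congr_fun
      (heq.symm.mono Ioc_subset_Icc_self) measurableSet_Ioc
  have hIoi : IntegrableOn (fun z => (1 - gpdCDF ξ z) ^ k) (Ioi m) :=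
    integrableOn_zero.congr_fun hzero.symm measurableSet_Ioi
  rw [← Ioc_union_Ioi_eq_Ioi ham]
  refine ⟨hIoc.union hIoi, ?_⟩
  rw [setIntegral_union Ioc_disjoint_Ioi_same measurableSet_Ioi hIoc hIoi,
    setIntegral_congr_fun measurableSet_Ioi hzero, integral_zero, add_zero,
    setIntegral_congr_fun measurableSet_Ioc (heq.mono Ioc_subset_Icc_self),
    ← intervalIntegral.integral_of_le ham, hFTC, hlin m, sub_self, mul_zero,
    Real.zero_rpow (div_ne_zero (sub_neg.2 (hξ.trans hk)).ne hξ.ne), one_sub_gpdCDF_rpow hξ.ne ha ha', neg_sub,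
    zero_div, zero_sub, ← div_neg, neg_sub]

theorem integral_Ioi_one_sub_gpdCDF_rpow (hξ : ξ ≠ 0) {k a : ℝ} (hk : 0 < k) (hξk : ξ < k)
    (ha : 0 ≤ a) (ha' : 0 ≤ 1 + ξ * a) :
    IntegrableOn (fun z => (1 - gpdCDF ξ z) ^ k) (Ioi a) ∧
      ∫ z in Ioi a, (1 - gpdCDF ξ z) ^ k = (1 - gpdCDF ξ a) ^ (k - ξ) / (k - ξ) :=
  hξ.lt_or_gt.elim (fun h => integral_Ioi_one_sub_gpdCDF_rpow_of_neg h hk ha ha')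
    (fun h => integral_Ioi_one_sub_gpdCDF_rpow_of_pos h hξk ha)

theorem one_add_mul_nonneg_of_le_neg_one_div {x : ℝ} (hx : 0 ≤ x) (hxξ : ξ < 0 → x ≤ -1 / ξ) :
    0 ≤ 1 + ξ * x := by
  rcases le_or_gt 0 ξ with h | h
  · positivity
  · linarith [(le_div_iff_of_neg h).1 (hxξ h)]

end GPD

theorem twCRPS_gpd (ξ : ℝ) (hξ0 : ξ ≠ 0) (hξ1 : ξ < 1)
    (τ y : ℝ) (hτ : 0 ≤ τ)
    (hτξ : ξ < 0 → τ ≤ -1 / ξ) (hyξ : ξ < 0 → y ≤ -1 / ξ) :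
    twCRPS (gpdCDF ξ) τ y =
      max y τ - τ
        + 2 / (1 - ξ) *
          ((1 - gpdCDF ξ (max y τ)) ^ (1 - ξ) - (1 - gpdCDF ξ τ) ^ (1 - ξ))
        + 1 / (2 - ξ) * (1 - gpdCDF ξ τ) ^ (2 - ξ) := by
  have hτ' := one_add_mul_nonneg_of_le_neg_one_div hτ hτξ
  have hv : 0 ≤ max y τ := hτ.trans (le_max_right y τ)
  have hv' := one_add_mul_nonneg_of_le_neg_one_div hv fun h => max_le (hyξ h) (hτξ h)
  obtain ⟨hint1, hτ1⟩ := integral_Ioi_one_sub_gpdCDF_rpow hξ0 one_pos hξ1 hτ hτ'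
  obtain ⟨hint2, hτ2⟩ := integral_Ioi_one_sub_gpdCDF_rpow hξ0 two_pos (by linarith) hτ hτ'
  have hv1 := (integral_Ioi_one_sub_gpdCDF_rpow hξ0 one_pos hξ1 hv hv').2
  simp only [Real.rpow_one, Real.rpow_two] at hint1 hτ1 hint2 hτ2 hv1
  rw [twCRPS_eq_integral_one_sub _ τ y hint2 hint1, hτ2, hτ1, hv1]
  ring
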